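/- The low persistence filter achieves the removal of low-persistence features: for a signal ((V,E), f) over a finite connected graph and any BHT 𝔗, the 0-dimensional persistence diagram of (G, 𝓛₀^ε f) is equivalent (up to trivial intervals) to the submultiset of PD₀(G, f) consisting of intervals [a,b) with b − a ≥ ε. -/

import Mathlib

open scoped Classical

/-- A (multi)graph given by source and target maps on an edge type. -/
structure SrcTgtGraph (V E : Type*) where
  src : E → V
  tgt : E → V

namespace SrcTgtGraph

variable {V E : Type*} (G : SrcTgtGraph V E)

/-- `e` is an edge joining `x` and `y`. -/
def Ends (e : E) (x y : V) : Prop :=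
  (G.src e = x ∧ G.tgt e = y) ∨ (G.src e = y ∧ G.tgt e = x)

/-- The graph is connected. -/
def Connected : Prop :=
  ∀ a b : V, Relation.ReflTransGen (fun x y => ∃ e, G.Ends e x y) a b

/-- Extension of a vertex signal to vertices and edges, `f(e) = max f(V(e))`. -/
def sig (f : V → ℝ) : V ⊕ E → ℝ
  | .inl v => f v
  | .inr e => max (f (G.src e)) (f (G.tgt e))

/-- `pos` realizes a `G`-ordering: a total ordering of `V ⊕ E` along which the
signal is nondecreasing and every vertex precedes each edge incident to it. -/
def IsGOrdering (f : V → ℝ) (pos : V ⊕ E → ℕ) : Prop :=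
  Function.Injective pos ∧
  (∀ a b, pos a ≤ pos b → G.sig f a ≤ G.sig f b) ∧
  (∀ e : E, pos (.inl (G.src e)) < pos (.inr e) ∧ pos (.inl (G.tgt e)) < pos (.inr e))

/-- Connectivity within the subgraph `G_{<k}` of elements with position `< k`. -/
def ConnB (pos : V ⊕ E → ℕ) (k : ℕ) (a b : V) : Prop :=
  pos (.inl a) < k ∧ pos (.inl b) < k ∧
    Relation.ReflTransGen (fun x y => ∃ e, pos (.inr e) < k ∧ G.Ends e x y) a b

/-- `m` is the `≺`-minimum of the connected component of `v` in `G_{<k}`. -/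
def IsCompMin (pos : V ⊕ E → ℕ) (k : ℕ) (m v : V) : Prop :=
  G.ConnB pos k m v ∧ ∀ w, G.ConnB pos k v w → pos (.inl m) ≤ pos (.inl w)

/-- The `≺`-maximal endpoint of an edge. -/
def maxEnd (pos : V ⊕ E → ℕ) (e : E) : V :=
  if pos (.inl (G.src e)) ≤ pos (.inl (G.tgt e)) then G.tgt e else G.src e

/-- `(p, L)` is a basin hierarchy tree of the signal `(G, f)` with respect to the
`G`-ordering `pos`, rooted at the `≺`-minimal vertex `r`, with linking-vertex map `L`. -/
structure IsBHT (f : V → ℝ) (pos : V ⊕ E → ℕ) (r : V) (p : V → V) (L : V → V) : Prop where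
  ordering : G.IsGOrdering f pos
  root_min : ∀ v, pos (.inl r) ≤ pos (.inl v)
  root_fix : p r = r
  reaches : ∀ v, ∃ n, p^[n] v = r
  spec : ∀ v, v ≠ r → ∃ e : E,
    G.IsCompMin pos (pos (.inr e)) v v ∧
    G.IsCompMin pos (pos (.inr e) + 1) (p v) v ∧
    L v = G.maxEnd pos e

end SrcTgtGraph

/-- `u` is an ancestor of `v` in the tree with parent map `p` (`u ⪯_T v`). -/
def Anc {V : Type*} (p : V → V) (u v : V) : Prop := ∃ n, p^[n] v = u

/-- `f(𝔏(v))`, with value `+∞` at the root. -/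
noncomputable def fLink {V : Type*} (f : V → ℝ) (r : V) (L : V → V) (v : V) : EReal :=
  if v = r then ⊤ else (f (L v) : EReal)

/-- The persistence `pers(v) = f(𝔏(v)) - f(v)` of a vertex in a BHT. -/
noncomputable def persBHT {V : Type*} (f : V → ℝ) (r : V) (L : V → V) (v : V) : EReal :=
  fLink f r L v - (f v : EReal)

namespace SrcTgtGraph

variable {V E : Type*} (G : SrcTgtGraph V E)

/-- The component of `v` dies at the edge `e`: `v` is the minimum of its component
just before `e` is added, and no longer after. -/
def DiesAt (pos : V ⊕ E → ℕ) (v : V) (e : E) : Prop :=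
  G.IsCompMin pos (pos (.inr e)) v v ∧ ¬ G.IsCompMin pos (pos (.inr e) + 1) v v

/-- The death value of the component created by `v` (`+∞` if permanent). -/
noncomputable def deathVal (f : V → ℝ) (pos : V ⊕ E → ℕ) (v : V) : EReal :=
  if h : ∃ e, G.DiesAt pos v e then ((G.sig f (.inr h.choose) : ℝ) : EReal) else ⊤

/-- The degree-0 persistence diagram of `(G, f)`, as a multiset of intervals
`[birth, death)` (including trivial intervals). -/
noncomputable def PD0 [Fintype V] (f : V → ℝ) (pos : V ⊕ E → ℕ) : Multiset (EReal × EReal) :=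
  Finset.univ.val.map fun v : V => ((f v : EReal), G.deathVal f pos v)

end SrcTgtGraph

/-- The nontrivial part of a multiset of intervals. -/
noncomputable def nontriv (M : Multiset (EReal × EReal)) : Multiset (EReal × EReal) :=
  M.filter fun ab => ab.1 < ab.2

/-- The 0-low-persistence filter associated to a BHT `(p, L)` rooted at `r`. -/
noncomputable def LPF {V : Type*} [Fintype V] (f : V → ℝ) (r : V) (p L : V → V)
    (ε : ℝ) (v : V) : ℝ :=
  (insert (f v) ((Finset.univ.filter fun u => Anc p u v ∧ persBHT f r L u < (ε : EReal)).image
    fun u => f (L u))).max' (Finset.insert_nonempty _ _)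

/-!
Both sides are multisets of intervals with real births, and such a multiset is determined by its
rank counts `#{[a, b) : a ≤ s, t < b}` for `s ≤ t`. By the elder rule, for `PD₀` of any signal
`g` (whatever `G`-ordering breaks its ties) this count is `β₀^{s,t}(g)`, the number of components
of `G_t` meeting `{g ≤ s}`. For `g = 𝓛₀^ε f` these components correspond to the vertices of the
basin hierarchy tree of persistence at least `ε` born by `s` and alive at `t`. The filter does not
change such a vertex; it joins every vertex of `{g ≤ s}` inside `G_t` to its first ancestor alive
at `t`, which has persistence at least `ε`; and since `f ≤ g`, two such vertices lie in different
components of `G_t` for `g` because they already do for `f`.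
-/

open Finset Relation Sum

theorem EReal.exists_real_cut (s : Finset EReal) {a x : EReal} (hax : a < x) :
    ∃ t : ℝ, a < t ∧ (t : EReal) < x ∧ ∀ y ∈ s, (t : EReal) < y ↔ x ≤ y := by
  have hsup : (s.filter (· < x)).sup id ⊔ a < x :=
    sup_lt_iff.2 ⟨(Finset.sup_lt_iff (bot_le.trans_lt hax)).2 fun y hy => (mem_filter.1 hy).2,
      hax⟩
  obtain ⟨t, hmt, htx⟩ := EReal.lt_iff_exists_real_btwn.1 hsup
  refine ⟨t, le_sup_right.trans_lt hmt, htx, fun y hy => ⟨fun hty => not_lt.1 fun hyx => ?_,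
    htx.trans_le⟩⟩
  have hys : y ≤ (s.filter (· < x)).sup id ⊔ a :=
    le_sup_of_le_left (le_sup (f := id) (mem_filter.2 ⟨hy, hyx⟩))
  exact (hys.trans_lt hmt).not_gt hty

theorem Multiset.countP_inclusion_exclusion {α : Type*} (M : Multiset α) {P P' Q Q' : α → Prop}
    [DecidablePred P] [DecidablePred P'] [DecidablePred Q] [DecidablePred Q']
    (hP : ∀ x, P' x → P x) (hQ : ∀ x, Q' x → Q x) :
    M.countP (fun x => (P x ∧ ¬P' x) ∧ Q x ∧ ¬Q' x) + M.countP (fun x => P' x ∧ Q x) +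
        M.countP (fun x => P x ∧ Q' x) =
      M.countP (fun x => P x ∧ Q x) + M.countP (fun x => P' x ∧ Q' x) := by
  induction M using Multiset.induction_on with
  | empty => simp
  | cons x M ih =>
    simp only [Multiset.countP_cons]
    have := hP x
    have := hQ x
    by_cases P x <;> by_cases P' x <;> by_cases Q x <;> by_cases Q' x <;> simp_all <;> omega

noncomputable def rankCount (M : Multiset (EReal × EReal)) (s t : EReal) : ℕ :=
  M.countP fun ab => ab.1 ≤ s ∧ t < ab.2

theorem count_add_rankCount {M : Multiset (EReal × EReal)} {a b s' t' : EReal} (hs'a : s' ≤ a)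
    (ht'b : t' ≤ b) (hs' : ∀ ab ∈ M, s' < ab.1 ↔ a ≤ ab.1)
    (ht' : ∀ ab ∈ M, t' < ab.2 ↔ b ≤ ab.2) :
    M.count (a, b) + rankCount M s' t' + rankCount M a b =
      rankCount M a t' + rankCount M s' b := by
  have hab : M.count (a, b) =
      M.countP fun ab => (ab.1 ≤ a ∧ ¬ab.1 ≤ s') ∧ t' < ab.2 ∧ ¬b < ab.2 := by
    refine Multiset.countP_congr rfl fun ab hab => propext ?_
    rw [not_le, not_lt, hs' ab hab, ht' ab hab, ← le_antisymm_iff, ← le_antisymm_iff,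
      Prod.ext_iff]
    exact ⟨fun ⟨h1, h2⟩ => ⟨h1.symm, h2⟩, fun ⟨h1, h2⟩ => ⟨h1.symm, h2⟩⟩
  rw [hab]
  exact M.countP_inclusion_exclusion (P := fun ab => ab.1 ≤ a) (P' := fun ab => ab.1 ≤ s')
    (Q := fun ab => t' < ab.2) (Q' := fun ab => b < ab.2) (fun _ h => h.trans hs'a)
    (fun _ h => ht'b.trans_lt h)

theorem eq_of_rankCount_eq {M M' : Multiset (EReal × EReal)}
    (hM : ∀ ab ∈ M, ⊥ < ab.1 ∧ ab.1 < ab.2) (hM' : ∀ ab ∈ M', ⊥ < ab.1 ∧ ab.1 < ab.2)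
    (h : ∀ s t : ℝ, s ≤ t → rankCount M s t = rankCount M' s t) : M = M' := by
  have h' : ∀ (s : ℝ) (τ : EReal), (s : EReal) < τ → rankCount M s τ = rankCount M' s τ := by
    intro s τ hsτ
    induction τ using EReal.rec with
    | bot => exact absurd hsτ not_lt_bot
    | coe t => exact h s t (EReal.coe_lt_coe_iff.1 hsτ).le
    | top => simp [rankCount]
  ext ⟨a, b⟩
  by_cases hab : ⊥ < a ∧ a < b
  swap
  · rw [Multiset.count_eq_zero_of_notMem (mt (hM _) hab),
      Multiset.count_eq_zero_of_notMem (mt (hM' _) hab)]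
  obtain ⟨a, rfl⟩ : ∃ x : ℝ, (x : EReal) = a :=
    ⟨a.toReal, EReal.coe_toReal (hab.2.trans_le le_top).ne hab.1.ne'⟩
  obtain ⟨s', -, hs'a, hs'⟩ := EReal.exists_real_cut ((M + M').map Prod.fst).toFinset hab.1
  obtain ⟨t', hat', ht'b, ht'⟩ := EReal.exists_real_cut ((M + M').map Prod.snd).toFinset hab.2
  have key : ∀ P ≤ M + M', P.count ((a : EReal), b) + rankCount P s' t' + rankCount P a b =
      rankCount P a t' + rankCount P s' b := fun P hP =>
    have hmem {ab} (hab : ab ∈ P) := Multiset.mem_of_le hP hab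
    count_add_rankCount hs'a.le ht'b.le
      (fun _ hab => hs' _ (Multiset.mem_toFinset.2 (Multiset.mem_map_of_mem _ (hmem hab))))
      (fun _ hab => ht' _ (Multiset.mem_toFinset.2 (Multiset.mem_map_of_mem _ (hmem hab))))
  have h1 := h' s' t' (hs'a.trans hat')
  have h2 := h' a b hab.2
  have h3 := h' a t' hat'
  have h4 := h' s' b (hs'a.trans hab.2)
  have k1 := key M (Multiset.le_add_right M M')
  have k2 := key M' (Multiset.le_add_left M' M)
  omega

theorem rankCount_nontriv (M : Multiset (EReal × EReal)) {s t : EReal} (hst : s ≤ t) :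
    rankCount (nontriv M) s t = rankCount M s t :=
  (Multiset.countP_filter _ _ _).trans <| Multiset.countP_congr rfl fun _ _ =>
    propext ⟨And.left, fun h => ⟨h, h.1.trans_lt (hst.trans_lt h.2)⟩⟩

namespace SrcTgtGraph

variable {V E : Type*} {G : SrcTgtGraph V E} {f : V → ℝ} {q : V ⊕ E → ℕ}
  {k j : ℕ} {e : E} {a b m v w x y : V}

theorem Ends.symm (h : G.Ends e x y) : G.Ends e y x := Or.symm h

theorem IsGOrdering.pos_lt_of_ends (hq : G.IsGOrdering f q) (h : G.Ends e x y) :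
    q (inl x) < q (inr e) := by
  rcases h with ⟨rfl, -⟩ | ⟨-, rfl⟩
  exacts [(hq.2.2 e).1, (hq.2.2 e).2]

theorem sig_inr_le_iff (h : G.Ends e x y) {t : ℝ} :
    G.sig f (inr e) ≤ t ↔ f x ≤ t ∧ f y ≤ t := by
  rcases h with ⟨rfl, rfl⟩ | ⟨rfl, rfl⟩ <;> simp [sig, and_comm]

theorem IsGOrdering.sig_eq_maxEnd (hq : G.IsGOrdering f q) (e : E) :
    G.sig f (inr e) = f (G.maxEnd q e) := by
  unfold maxEnd
  split_ifs with hle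
  · exact max_eq_right (hq.2.1 _ _ hle)
  · exact max_eq_left (hq.2.1 _ _ (not_le.1 hle).le)

theorem reflTransGen_ends_symm {R : E → Prop}
    (h : ReflTransGen (fun x y => ∃ e, R e ∧ G.Ends e x y) a b) :
    ReflTransGen (fun x y => ∃ e, R e ∧ G.Ends e x y) b a :=
  ReflTransGen.mono (fun _ _ ⟨e, he, hxy⟩ => ⟨e, he, hxy.symm⟩) _ _ (ReflTransGen.swap b a h)

namespace ConnB

theorem refl (hv : q (inl v) < k) : G.ConnB q k v v := ⟨hv, hv, .refl⟩

theorem symm (h : G.ConnB q k a b) : G.ConnB q k b a :=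
  ⟨h.2.1, h.1, reflTransGen_ends_symm h.2.2⟩

theorem trans (hab : G.ConnB q k a b) (hbc : G.ConnB q k b x) : G.ConnB q k a x :=
  ⟨hab.1, hbc.2.1, hab.2.2.trans hbc.2.2⟩

theorem mono {k' : ℕ} (hk : k ≤ k') (h : G.ConnB q k a b) : G.ConnB q k' a b :=
  ⟨h.1.trans_le hk, h.2.1.trans_le hk,
    ReflTransGen.mono (fun _ _ ⟨e, he, hxy⟩ => ⟨e, he.trans_le hk, hxy⟩) _ _ h.2.2⟩

end ConnB

namespace IsCompMin

theorem eq {m' v' : V} (hm : G.IsCompMin q k m v) (hm' : G.IsCompMin q k m' v')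
    (hvv' : G.ConnB q k v v') (hq : Function.Injective q) : m = m' :=
  inl_injective <| hq <| le_antisymm (hm.2 _ (hvv'.trans hm'.1.symm))
    (hm'.2 _ (hvv'.symm.trans hm.1.symm))

theorem self (hm : G.IsCompMin q k m v) : G.IsCompMin q k m m :=
  ⟨.refl hm.1.1, fun w hw => hm.2 w (hm.1.symm.trans hw)⟩

theorem of_connB (hm : G.IsCompMin q k m v) (hvw : G.ConnB q k v w) : G.IsCompMin q k m w :=
  ⟨hm.1.trans hvw, fun _ hw => hm.2 _ (hvw.trans hw)⟩

theorem anti (hvj : q (inl v) < j) (hjk : j ≤ k) (hv : G.IsCompMin q k v v) :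
    G.IsCompMin q j v v :=
  ⟨.refl hvj, fun w hw => hv.2 w (hw.mono hjk)⟩

/-- Without an edge at position `j`, stage `j + 1` only adds an isolated vertex. -/
theorem succ (hq : G.IsGOrdering f q) (hno : ∀ e, q (inr e) ≠ j) (hv : G.IsCompMin q j v v) :
    G.IsCompMin q (j + 1) v v := by
  refine ⟨hv.1.mono j.le_succ, fun w hw => ?_⟩
  have hpath : ReflTransGen (fun x y => ∃ e, q (inr e) < j ∧ G.Ends e x y) v w :=
    ReflTransGen.mono (fun _ _ ⟨e, he, hxy⟩ =>
      ⟨e, (Nat.lt_succ_iff.1 he).lt_of_ne (hno e), hxy⟩) _ _ hw.2.2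
  have hwj : q (inl w) < j := by
    rcases hpath.cases_tail with rfl | ⟨x, -, e, he, hxw⟩
    exacts [hv.1.1, (hq.pos_lt_of_ends hxw.symm).trans he]
  exact hv.2 w ⟨hv.1.1, hwj, hpath⟩

end IsCompMin

variable (G) in
theorem exists_isCompMin [Fintype V] (hv : q (inl v) < k) : ∃ m, G.IsCompMin q k m v := by
  obtain ⟨m, hm, hmin⟩ := (univ.filter fun w => G.ConnB q k v w).exists_min_image
    (fun w => q (inl w)) ⟨v, by simpa using ConnB.refl hv⟩
  simp only [mem_filter, mem_univ, true_and] at hm hmin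
  exact ⟨m, hm.symm, hmin⟩

theorem IsGOrdering.isCompMin_birth (hq : G.IsGOrdering f q) (v : V) :
    G.IsCompMin q (q (inl v) + 1) v v := by
  refine ⟨.refl (Nat.lt_succ_self _), ?_⟩
  rintro w ⟨-, -, hpath⟩
  suffices w = v by rw [this]
  induction hpath with
  | refl => rfl
  | tail _ hstep ih =>
    obtain ⟨e, he, hends⟩ := hstep
    subst ih
    have := hq.pos_lt_of_ends hends
    omega

theorem DiesAt.unique (hq : G.IsGOrdering f q) {e' : E} (he : G.DiesAt q v e)
    (he' : G.DiesAt q v e') : e = e' := by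
  by_contra hne
  have hv := he.1.1.1
  have hv' := he'.1.1.1
  rcases lt_or_gt_of_ne (hq.1.ne (inr_injective.ne hne)) with hlt | hlt
  exacts [he.2 (he'.1.anti (by omega) hlt), he'.2 (he.1.anti (by omega) hlt)]

theorem IsGOrdering.isCompMin_iff_forall_diesAt (hq : G.IsGOrdering f q)
    (hvk : q (inl v) < k) :
    G.IsCompMin q k v v ↔ ∀ e, G.DiesAt q v e → k ≤ q (inr e) := by
  refine ⟨fun hv e he => not_lt.1 fun hlt => he.2 (hv.anti (by have := he.1.1.1; omega) hlt),
    fun h => ?_⟩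
  induction k, Nat.succ_le_of_lt hvk using Nat.le_induction with
  | base => exact hq.isCompMin_birth v
  | succ k hk ih =>
    have hv := ih (by omega) fun e he => Nat.le_of_succ_le (h e he)
    by_cases hedge : ∃ e, q (inr e) = k
    · obtain ⟨e, rfl⟩ := hedge
      by_contra hbreak
      exact absurd (h e ⟨hv, hbreak⟩) (by omega)
    · exact hv.succ hq (not_exists.1 hedge)

theorem IsGOrdering.lt_deathVal_iff (hq : G.IsGOrdering f q) {t : ℝ} :
    (t : EReal) < G.deathVal f q v ↔ ∀ e, G.DiesAt q v e → t < G.sig f (inr e) := by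
  unfold deathVal
  split_ifs with h
  · rw [EReal.coe_lt_coe_iff]
    exact ⟨fun ht e he => h.choose_spec.unique hq he ▸ ht, fun H => H _ h.choose_spec⟩
  · exact ⟨fun _ e he => absurd ⟨e, he⟩ h, fun _ => EReal.coe_lt_top t⟩

variable {g : V → ℝ} {s t : ℝ}

variable (G) in
noncomputable def sublevelStage [Fintype V] [Fintype E] (f : V → ℝ) (q : V ⊕ E → ℕ) (t : ℝ) :
    ℕ :=
  (univ.filter fun x => G.sig f x ≤ t).sup fun x => q x + 1

theorem IsGOrdering.lt_sublevelStage_iff [Fintype V] [Fintype E] (hq : G.IsGOrdering f q)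
    {x : V ⊕ E} : q x < G.sublevelStage f q t ↔ G.sig f x ≤ t := by
  simp only [sublevelStage, Finset.lt_sup_iff, mem_filter, mem_univ, true_and]
  exact ⟨fun ⟨y, hy, hxy⟩ => (hq.2.1 x y (by omega)).trans hy, fun hx => ⟨x, hx, by omega⟩⟩

theorem IsGOrdering.lt_deathVal_iff_isCompMin [Fintype V] [Fintype E]
    (hq : G.IsGOrdering f q) (hv : f v ≤ t) :
    (t : EReal) < G.deathVal f q v ↔ G.IsCompMin q (G.sublevelStage f q t) v v := by
  rw [hq.lt_deathVal_iff, hq.isCompMin_iff_forall_diesAt (hq.lt_sublevelStage_iff.2 hv)]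
  refine forall₂_congr fun e _ => ?_
  rw [← not_lt, hq.lt_sublevelStage_iff, not_le]

variable (G) in
def SublevelConn (f : V → ℝ) (t : ℝ) : V → V → Prop :=
  ReflTransGen fun x y => ∃ e, G.sig f (inr e) ≤ t ∧ G.Ends e x y

theorem SublevelConn.symm (h : G.SublevelConn f t a b) : G.SublevelConn f t b a :=
  reflTransGen_ends_symm h

theorem SublevelConn.of_le (hfg : ∀ v, f v ≤ g v) (h : G.SublevelConn g t a b) :
    G.SublevelConn f t a b :=
  ReflTransGen.mono (fun _ _ ⟨e, he, hxy⟩ =>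
    ⟨e, (max_le_max (hfg _) (hfg _)).trans he, hxy⟩) _ _ h

theorem ConnB.sublevelConn [Fintype V] [Fintype E] (hq : G.IsGOrdering f q)
    (h : G.ConnB q (G.sublevelStage f q t) a b) : G.SublevelConn f t a b :=
  ReflTransGen.mono (fun _ _ ⟨e, he, hxy⟩ => ⟨e, hq.lt_sublevelStage_iff.1 he, hxy⟩) _ _ h.2.2

theorem SublevelConn.connB [Fintype V] [Fintype E] (hq : G.IsGOrdering f q) (ha : f a ≤ t)
    (hb : f b ≤ t) (h : G.SublevelConn f t a b) : G.ConnB q (G.sublevelStage f q t) a b :=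
  ⟨hq.lt_sublevelStage_iff.2 ha, hq.lt_sublevelStage_iff.2 hb,
    ReflTransGen.mono (fun _ _ ⟨e, he, hxy⟩ => ⟨e, hq.lt_sublevelStage_iff.2 he, hxy⟩) _ _ h⟩

theorem ConnB.sublevelConn_of_forall_le (hq : G.IsGOrdering f q) {k : ℕ}
    (hg : ∀ z, G.ConnB q k v z → g z ≤ t) (h : G.ConnB q k v w) : G.SublevelConn g t v w := by
  obtain ⟨hv, -, hpath⟩ := h
  induction hpath with
  | refl => exact .refl
  | @tail b c hvb hbc ih =>
    obtain ⟨e, he, hends⟩ := hbc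
    have hb : G.ConnB q k v b := ⟨hv, (hq.pos_lt_of_ends hends).trans he, hvb⟩
    have hc : G.ConnB q k v c :=
      hb.trans ⟨hb.2.1, (hq.pos_lt_of_ends hends.symm).trans he, .single ⟨e, he, hends⟩⟩
    exact ih.tail ⟨e, (sig_inr_le_iff hends).2 ⟨hg b hb, hg c hc⟩, hends⟩

variable (G) in
def sublevelSetoid (f : V → ℝ) (s t : ℝ) : Setoid {v : V // f v ≤ s} where
  r a b := G.SublevelConn f t a b
  iseqv := ⟨fun _ => .refl, SublevelConn.symm, ReflTransGen.trans⟩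

variable (G) in
/-- The persistent Betti number `β₀^{s,t}`: the rank of `H₀(G_s) → H₀(G_t)`, i.e. the number
of components of `G_t` that meet `{f ≤ s}`. -/
noncomputable def persBetti0 (f : V → ℝ) (s t : ℝ) : ℕ :=
  Nat.card (Quotient (G.sublevelSetoid f s t))

theorem card_eq_persBetti0 [Fintype V] (A : Finset V) (hA : ∀ v ∈ A, f v ≤ s)
    (hinj : ∀ v ∈ A, ∀ w ∈ A, G.SublevelConn f t v w → v = w)
    (hsurj : ∀ w, f w ≤ s → ∃ v ∈ A, G.SublevelConn f t w v) :
    A.card = G.persBetti0 f s t := by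
  rw [persBetti0, ← Nat.card_eq_finsetCard]
  refine Nat.card_eq_of_bijective (fun v => ⟦⟨v.1, hA v.1 v.2⟩⟧) ⟨?_, ?_⟩
  · rintro ⟨v, hv⟩ ⟨w, hw⟩ hvw
    exact Subtype.ext (hinj v hv w hw (Quotient.exact hvw))
  · rintro ⟨⟨w, hw⟩⟩
    obtain ⟨v, hv, hwv⟩ := hsurj w hw
    exact ⟨⟨v, hv⟩, Quotient.sound hwv.symm⟩

theorem IsGOrdering.eq_of_sublevelConn [Fintype V] [Fintype E] (hq : G.IsGOrdering f q)
    (hv : f v ≤ t) (hw : f w ≤ t) (hv' : (t : EReal) < G.deathVal f q v)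
    (hw' : (t : EReal) < G.deathVal f q w) (hvw : G.SublevelConn f t v w) : v = w :=
  ((hq.lt_deathVal_iff_isCompMin hv).1 hv').eq ((hq.lt_deathVal_iff_isCompMin hw).1 hw')
    (hvw.connB hq hv hw) hq.1

theorem IsGOrdering.card_born_alive_eq_persBetti0 [Fintype V] [Fintype E]
    (hq : G.IsGOrdering f q) (hst : s ≤ t) :
    (univ.filter fun v => f v ≤ s ∧ (t : EReal) < G.deathVal f q v).card =
      G.persBetti0 f s t := by
  refine card_eq_persBetti0 _ (fun v hv => (mem_filter.1 hv).2.1) ?_ fun w hw => ?_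
  · simp only [mem_filter, mem_univ, true_and]
    exact fun v hv w hw => hq.eq_of_sublevelConn (hv.1.trans hst) (hw.1.trans hst) hv.2 hw.2
  · have hwt : q (inl w) < G.sublevelStage f q t := hq.lt_sublevelStage_iff.2 (hw.trans hst)
    obtain ⟨m, hm⟩ := G.exists_isCompMin hwt
    have hms : f m ≤ s := (hq.2.1 (inl m) (inl w) (hm.2 w (.refl hwt))).trans hw
    refine ⟨m, mem_filter.2 ⟨mem_univ m, hms, ?_⟩, (hm.1.sublevelConn hq).symm⟩
    exact (hq.lt_deathVal_iff_isCompMin (hms.trans hst)).2 hm.self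

end SrcTgtGraph

section Tree

variable {V : Type*} {p : V → V} {f : V → ℝ} {r : V} {L : V → V} {u v w : V}

theorem Anc.parent (p : V → V) (v : V) : Anc p (p v) v := ⟨1, rfl⟩

theorem Anc.trans (hwu : Anc p w u) (huv : Anc p u v) : Anc p w v := by
  obtain ⟨m, rfl⟩ := hwu
  obtain ⟨n, rfl⟩ := huv
  exact ⟨m + n, Function.iterate_add_apply p m n v⟩

theorem Anc.le_of_forall_le_parent {β : Type*} [Preorder β] {φ : V → β}
    (hφ : ∀ v, φ v ≤ φ (p v)) (h : Anc p u v) : φ v ≤ φ u := by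
  obtain ⟨n, rfl⟩ := h
  induction n with
  | zero => exact le_rfl
  | succ n ih => exact ih.trans (Function.iterate_succ_apply' p n v ▸ hφ _)

@[simp]
theorem fLink_root (f : V → ℝ) (r : V) (L : V → V) : fLink f r L r = ⊤ := if_pos rfl

theorem fLink_of_ne (hv : v ≠ r) :
    fLink f r L v = f (L v) := if_neg hv

theorem ne_of_persBHT_lt {ε : ℝ}
    (h : persBHT f r L v < ε) : v ≠ r := by
  rintro rfl
  simp [persBHT] at h

theorem persBHT_of_ne (hv : v ≠ r) :
    persBHT f r L v = ((f (L v) - f v : ℝ) : EReal) := by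
  rw [persBHT, fLink_of_ne hv, EReal.coe_sub]

end Tree

namespace SrcTgtGraph.IsBHT

variable {V E : Type*} {G : SrcTgtGraph V E} {f : V → ℝ} {pos : V ⊕ E → ℕ} {r : V}
  {p L : V → V} (hbht : G.IsBHT f pos r p L) {k : ℕ} {m u v : V}
include hbht

noncomputable def mergeEdge (hv : v ≠ r) : E := (hbht.spec v hv).choose

theorem isCompMin_mergeEdge (hv : v ≠ r) :
    G.IsCompMin pos (pos (inr (hbht.mergeEdge hv))) v v :=
  (hbht.spec v hv).choose_spec.1

theorem isCompMin_parent_mergeEdge (hv : v ≠ r) :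
    G.IsCompMin pos (pos (inr (hbht.mergeEdge hv)) + 1) (p v) v :=
  (hbht.spec v hv).choose_spec.2.1

theorem f_link_eq_sig (hv : v ≠ r) : f (L v) = G.sig f (inr (hbht.mergeEdge hv)) := by
  rw [(hbht.spec v hv).choose_spec.2.2, hbht.ordering.sig_eq_maxEnd]
  rfl

theorem parent_ne (hv : v ≠ r) : p v ≠ v := by
  intro hpv
  obtain ⟨n, hn⟩ := hbht.reaches v
  exact hv (Function.iterate_fixed hpv n ▸ hn)

theorem isCompMin_root (hk : pos (inl r) < k) : G.IsCompMin pos k r r :=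
  ⟨.refl hk, fun w _ => hbht.root_min w⟩

theorem diesAt_mergeEdge (hv : v ≠ r) : G.DiesAt pos v (hbht.mergeEdge hv) :=
  ⟨hbht.isCompMin_mergeEdge hv, fun hmin => hbht.parent_ne hv <|
    ((hbht.isCompMin_parent_mergeEdge hv).eq hmin (.refl hmin.1.1) hbht.ordering.1)⟩

theorem deathVal_eq_fLink (v : V) : G.deathVal f pos v = fLink f r L v := by
  by_cases hv : v = r
  · subst hv
    rw [fLink_root, deathVal, dif_neg]
    rintro ⟨e, he⟩
    exact he.2 (hbht.isCompMin_root (Nat.lt_succ_of_lt he.1.1.1))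
  · have hdies : ∃ e, G.DiesAt pos v e := ⟨_, hbht.diesAt_mergeEdge hv⟩
    rw [deathVal, dif_pos hdies, fLink_of_ne hv, hbht.f_link_eq_sig hv,
      hdies.choose_spec.unique hbht.ordering (hbht.diesAt_mergeEdge hv)]

theorem pos_parent_le (v : V) : pos (inl (p v)) ≤ pos (inl v) := by
  by_cases hv : v = r
  · rw [hv, hbht.root_fix]
  · exact (hbht.isCompMin_parent_mergeEdge hv).2 v
      (.refl (Nat.lt_succ_of_lt (hbht.isCompMin_mergeEdge hv).1.1))

theorem f_le_of_anc (h : Anc p u v) : f u ≤ f v :=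
  Anc.le_of_forall_le_parent (β := ℝᵒᵈ)
    (fun w => hbht.ordering.2.1 (inl (p w)) (inl w) (hbht.pos_parent_le w)) h

theorem exists_isCompMin_iterate (hk : pos (inl v) < k) :
    ∃ m, G.IsCompMin pos k (p^[m] v) v ∧
      ∀ i < m, ∃ hi : p^[i] v ≠ r, pos (inr (hbht.mergeEdge hi)) < k := by
  obtain ⟨n, hn⟩ := hbht.reaches v
  induction n generalizing v with
  | zero => exact ⟨0, by subst hn; exact hbht.isCompMin_root hk, by simp⟩
  | succ n ih =>
    by_cases hvr : v = r
    · exact ⟨0, by subst hvr; exact hbht.isCompMin_root hk, by simp⟩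
    by_cases hlate : k ≤ pos (inr (hbht.mergeEdge hvr))
    · exact ⟨0, (hbht.isCompMin_mergeEdge hvr).anti hk hlate, by simp⟩
    obtain ⟨m, hm, hearly⟩ := ih ((hbht.pos_parent_le v).trans_lt hk) hn
    refine ⟨m + 1, hm.of_connB ((hbht.isCompMin_parent_mergeEdge hvr).1.mono (by omega)), ?_⟩
    rintro (_ | i) hi
    · exact ⟨hvr, not_le.1 hlate⟩
    · exact hearly i (by omega)

theorem anc_of_isCompMin (hk : pos (inl v) < k) (hm : G.IsCompMin pos k m v) : Anc p m v := by
  obtain ⟨j, hj, -⟩ := hbht.exists_isCompMin_iterate hk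
  exact ⟨j, hj.eq hm (.refl hk) hbht.ordering.1⟩

theorem anc_of_isCompMin_of_le_mergeEdge (hk : pos (inl v) < k) (hm : G.IsCompMin pos k m v)
    (huv : Anc p u v) (hlate : ∀ hu : u ≠ r, k ≤ pos (inr (hbht.mergeEdge hu))) : Anc p u m := by
  obtain ⟨j, rfl⟩ := huv
  obtain ⟨i, hi, hearly⟩ := hbht.exists_isCompMin_iterate hk
  obtain rfl := hm.eq hi (.refl hk) hbht.ordering.1
  have hij : i ≤ j := not_lt.1 fun hji => by
    obtain ⟨hj, hlt⟩ := hearly j hji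
    exact absurd (hlate hj) (not_le.2 hlt)
  exact ⟨j - i, by rw [← Function.iterate_add_apply, Nat.sub_add_cancel hij]⟩

theorem pos_mergeEdge_lt_parent (hv : v ≠ r) (hpv : p v ≠ r) :
    pos (inr (hbht.mergeEdge hv)) < pos (inr (hbht.mergeEdge hpv)) := by
  by_contra! hle
  exact (hbht.diesAt_mergeEdge hpv).2 <| (hbht.isCompMin_parent_mergeEdge hv).self.anti
    (Nat.lt_succ_of_lt (hbht.isCompMin_mergeEdge hpv).1.1) (by omega)

theorem fLink_le_parent (v : V) : fLink f r L v ≤ fLink f r L (p v) := by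
  by_cases hv : v = r
  · rw [hv, hbht.root_fix]
  by_cases hpv : p v = r
  · simp [hpv]
  rw [fLink_of_ne hv, fLink_of_ne hpv, EReal.coe_le_coe_iff, hbht.f_link_eq_sig hv,
    hbht.f_link_eq_sig hpv]
  exact hbht.ordering.2.1 _ _ (hbht.pos_mergeEdge_lt_parent hv hpv).le

theorem fLink_le_of_anc (h : Anc p u v) : fLink f r L v ≤ fLink f r L u :=
  h.le_of_forall_le_parent hbht.fLink_le_parent

end SrcTgtGraph.IsBHT

section LPF

variable {V : Type*} [Fintype V] {f : V → ℝ} {r : V} {p L : V → V} {ε c : ℝ} {u v : V}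

theorem lpf_le_iff : LPF f r p L ε v ≤ c ↔
    f v ≤ c ∧ ∀ u, Anc p u v → persBHT f r L u < ε → f (L u) ≤ c := by
  simp [LPF, Finset.max'_le_iff, forall_comm (α := ℝ)]

theorem le_lpf (f : V → ℝ) (r : V) (p L : V → V) (ε : ℝ) (v : V) : f v ≤ LPF f r p L ε v :=
  (lpf_le_iff.1 le_rfl).1

theorem f_link_le_lpf (hu : Anc p u v) (hpers : persBHT f r L u < ε) :
    f (L u) ≤ LPF f r p L ε v :=
  (lpf_le_iff.1 le_rfl).2 u hu hpers

end LPF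

namespace SrcTgtGraph.IsBHT

variable {V E : Type*} [Fintype V] {G : SrcTgtGraph V E} {f : V → ℝ} {pos : V ⊕ E → ℕ}
  {r : V} {p L : V → V} (hbht : G.IsBHT f pos r p L) {ε s t : ℝ} {v : V}
include hbht

/-- Persistence does not decrease towards the root (`f` decreases and `fLink` increases), so no
ancestor of `v` has persistence below `ε`. -/
theorem lpf_eq_of_le_persBHT (hv : ε ≤ persBHT f r L v) : LPF f r p L ε v = f v := by
  refine le_antisymm (lpf_le_iff.2 ⟨le_rfl, fun u hu hpers => ?_⟩) (le_lpf f r p L ε v)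
  have hur := ne_of_persBHT_lt hpers
  have hlink := hbht.fLink_le_of_anc hu
  by_cases hvr : v = r
  · simp [hvr, fLink_of_ne hur] at hlink
  rw [fLink_of_ne hvr, fLink_of_ne hur, EReal.coe_le_coe_iff] at hlink
  rw [persBHT_of_ne hvr, EReal.coe_le_coe_iff] at hv
  rw [persBHT_of_ne hur, EReal.coe_lt_coe_iff] at hpers
  linarith [hbht.f_le_of_anc hu]

theorem lpf_parent_le (v : V) : LPF f r p L ε (p v) ≤ LPF f r p L ε v :=
  lpf_le_iff.2 ⟨(hbht.f_le_of_anc (.parent p v)).trans (le_lpf f r p L ε v),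
    fun _ hu hpers => f_link_le_lpf ((hu.trans (.parent p v))) hpers⟩

/-- A low-persistence ancestor `u` of `z` either merged no later than `v`, or is an ancestor of
the minimum of the component of `z` and `v`, hence of `v`. -/
theorem lpf_le_of_connB_mergeEdge (hv : v ≠ r) (he : G.sig f (inr (hbht.mergeEdge hv)) ≤ t)
    (hgv : LPF f r p L ε v ≤ t) {z : V}
    (hz : G.ConnB pos (pos (inr (hbht.mergeEdge hv)) + 1) v z) : LPF f r p L ε z ≤ t := by
  have hfz : f z ≤ t := (hbht.ordering.2.1 (inl z) _ (Nat.lt_succ_iff.1 hz.2.1)).trans he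
  refine lpf_le_iff.2 ⟨hfz, fun u hu hpers => ?_⟩
  have hur := ne_of_persBHT_lt hpers
  by_cases hearly : pos (inr (hbht.mergeEdge hur)) ≤ pos (inr (hbht.mergeEdge hv))
  · exact hbht.f_link_eq_sig hur ▸ (hbht.ordering.2.1 _ _ hearly).trans he
  obtain ⟨m, hm⟩ := G.exists_isCompMin hz.2.1
  have hum : Anc p u m := hbht.anc_of_isCompMin_of_le_mergeEdge hz.2.1 hm hu fun hur' => by omega
  have hmv : Anc p m v := hbht.anc_of_isCompMin hz.1 (hm.of_connB hz.symm)
  exact (f_link_le_lpf (hum.trans hmv) hpers).trans hgv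

theorem sublevelConn_lpf_parent (hv : v ≠ r) (he : G.sig f (inr (hbht.mergeEdge hv)) ≤ t)
    (hgv : LPF f r p L ε v ≤ t) : G.SublevelConn (LPF f r p L ε) t v (p v) :=
  (hbht.isCompMin_parent_mergeEdge hv).1.symm.sublevelConn_of_forall_le hbht.ordering
    fun _ hz => hbht.lpf_le_of_connB_mergeEdge hv he hgv hz

theorem sublevelConn_lpf_iterate {i : ℕ} {x : V}
    (hdead : ∀ j < i, fLink f r L (p^[j] x) ≤ t) (hgx : LPF f r p L ε x ≤ t) :
    G.SublevelConn (LPF f r p L ε) t x (p^[i] x) := by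
  induction i generalizing x with
  | zero => exact .refl
  | succ i ih =>
    have hx : fLink f r L x ≤ t := hdead 0 i.succ_pos
    have hxr : x ≠ r := by rintro rfl; simp at hx
    rw [fLink_of_ne hxr, EReal.coe_le_coe_iff, hbht.f_link_eq_sig hxr] at hx
    exact (hbht.sublevelConn_lpf_parent hxr hx hgx).trans
      (ih (fun j hj => hdead (j + 1) (by omega)) ((hbht.lpf_parent_le x).trans hgx))

variable [Fintype E]

theorem card_high_eq_persBetti0_lpf (hst : s ≤ t) :
    (univ.filter fun v => f v ≤ s ∧ (t : EReal) < fLink f r L v ∧ ε ≤ persBHT f r L v).card =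
      G.persBetti0 (LPF f r p L ε) s t := by
  have hg : ∀ v, f v ≤ s → ε ≤ persBHT f r L v → LPF f r p L ε v ≤ s := fun v hv hpers =>
    (hbht.lpf_eq_of_le_persBHT hpers).trans_le hv
  refine card_eq_persBetti0 _ (fun v hv => hg v (mem_filter.1 hv).2.1 (mem_filter.1 hv).2.2.2)
    ?_ fun w hw => ?_
  · simp only [mem_filter, mem_univ, true_and, ← hbht.deathVal_eq_fLink]
    exact fun v hv w hw hvw => hbht.ordering.eq_of_sublevelConn (hv.1.trans hst)
      (hw.1.trans hst) hv.2.1 hw.2.1 (hvw.of_le (le_lpf f r p L ε))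
  · have hex : ∃ i, (t : EReal) < fLink f r L (p^[i] w) := by
      obtain ⟨n, hn⟩ := hbht.reaches w
      exact ⟨n, by simp [hn]⟩
    have hanc : Anc p (p^[Nat.find hex] w) w := ⟨_, rfl⟩
    have halive := Nat.find_spec hex
    have hhigh : ε ≤ persBHT f r L (p^[Nat.find hex] w) := by
      by_contra! hlow
      rw [fLink_of_ne (ne_of_persBHT_lt hlow), EReal.coe_lt_coe_iff] at halive
      linarith [f_link_le_lpf hanc hlow]
    refine ⟨_, mem_filter.2 ⟨mem_univ _, ?_, halive, hhigh⟩, ?_⟩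
    · exact (hbht.f_le_of_anc hanc).trans ((le_lpf f r p L ε w).trans hw)
    · exact hbht.sublevelConn_lpf_iterate (fun j hj => not_lt.1 (Nat.find_min hex hj))
        (hw.trans hst)

end SrcTgtGraph.IsBHT

namespace SrcTgtGraph

variable {V E : Type*} [Fintype V] {G : SrcTgtGraph V E} {f : V → ℝ} {q : V ⊕ E → ℕ}

theorem bot_lt_of_mem_PD0 {ab : EReal × EReal} (h : ab ∈ G.PD0 f q) : ⊥ < ab.1 := by
  obtain ⟨v, -, rfl⟩ := Multiset.mem_map.1 h
  exact EReal.bot_lt_coe (f v)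

theorem countP_PD0 (P : EReal × EReal → Prop) [DecidablePred P] :
    (G.PD0 f q).countP P = (univ.filter fun v => P (f v, G.deathVal f q v)).card :=
  Multiset.countP_map _ _ _

theorem rankCount_PD0 (s t : ℝ) : rankCount (G.PD0 f q) s t =
    (univ.filter fun v => f v ≤ s ∧ (t : EReal) < G.deathVal f q v).card := by
  rw [rankCount, countP_PD0]
  simp only [EReal.coe_le_coe_iff]

theorem IsBHT.rankCount_PD0_filter_le_pers {pos : V ⊕ E → ℕ} {r : V} {p L : V → V}
    (hbht : G.IsBHT f pos r p L) (ε : ℝ) {s t : ℝ} (hst : s ≤ t) :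
    rankCount ((G.PD0 f pos).filter fun ab => ab.1 < ab.2 ∧ (ε : EReal) ≤ ab.2 - ab.1) s t =
      (univ.filter fun v => f v ≤ s ∧ (t : EReal) < fLink f r L v ∧
        (ε : EReal) ≤ persBHT f r L v).card := by
  rw [rankCount, Multiset.countP_filter, countP_PD0]
  refine congrArg card (filter_congr fun v _ => ?_)
  simp only [hbht.deathVal_eq_fLink, persBHT, EReal.coe_le_coe_iff]
  exact ⟨fun ⟨⟨hs, ht⟩, _, hε⟩ => ⟨hs, ht, hε⟩,
    fun ⟨hs, ht, hε⟩ => ⟨⟨hs, ht⟩, (EReal.coe_le_coe_iff.2 (hs.trans hst)).trans_lt ht, hε⟩⟩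

end SrcTgtGraph

theorem lpf_filters_PD0_general {V E : Type*} [Fintype V] [Fintype E]
    (G : SrcTgtGraph V E) (f : V → ℝ) (pos : V ⊕ E → ℕ)
    (r : V) (p L : V → V) (hbht : G.IsBHT f pos r p L)
    (ε : ℝ)
    (g : V → ℝ) (hg : g = LPF f r p L ε)
    (pos' : V ⊕ E → ℕ) (hord : G.IsGOrdering g pos') :
    nontriv (G.PD0 g pos') =
      (G.PD0 f pos).filter
        (fun ab => ab.1 < ab.2 ∧ (ε : EReal) ≤ ab.2 - ab.1) := by
  subst hg
  refine eq_of_rankCount_eq (fun ab hab => ?_) (fun ab hab => ?_) fun s t hst => ?_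
  · obtain ⟨hmem, hlt⟩ := Multiset.mem_filter.1 hab
    exact ⟨SrcTgtGraph.bot_lt_of_mem_PD0 hmem, hlt⟩
  · obtain ⟨hmem, hlt, -⟩ := Multiset.mem_filter.1 hab
    exact ⟨SrcTgtGraph.bot_lt_of_mem_PD0 hmem, hlt⟩
  rw [rankCount_nontriv _ (EReal.coe_le_coe_iff.2 hst), SrcTgtGraph.rankCount_PD0,
    hord.card_born_alive_eq_persBetti0 hst, hbht.rankCount_PD0_filter_le_pers ε hst,
    hbht.card_high_eq_persBetti0_lpf hst]

/-- The low-persistence filter removes exactly the low-persistence features: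
up to trivial intervals, `PD₀(G, 𝓛₀^ε f)` is the submultiset of `PD₀(G, f)`
of intervals of persistence at least `ε`. -/
theorem lpf_filters_PD0 {V E : Type*} [Fintype V] [Fintype E]
    (G : SrcTgtGraph V E) (hG : G.Connected) (f : V → ℝ) (pos : V ⊕ E → ℕ)
    (r : V) (p L : V → V) (hbht : G.IsBHT f pos r p L)
    (ε : ℝ) (hε : 0 < ε)
    (g : V → ℝ) (hg : g = LPF f r p L ε)
    (pos' : V ⊕ E → ℕ) (hord : G.IsGOrdering g pos') :
    nontriv (G.PD0 g pos') =
      (G.PD0 f pos).filter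
        (fun ab => ab.1 < ab.2 ∧ (ε : EReal) ≤ ab.2 - ab.1) :=
  lpf_filters_PD0_general G f pos r p L hbht ε g hg pos' hord
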